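/- arXiv:1212.0398 — 3 statements merged into one kernel-verified Lean document; each statement's English description precedes it below -/
import Mathlib

section
/- (Stationary distribution from traffic solution) Consider a self-reacting system with rate q(x,x') = ∑_{u,u',y} q_d^u(x,y)·r(u,y,u')·p_a^{u'}(y,x') + q_i(x,x') on finite S, whose stationary distribution π satisfies the departure-balance condition ∑_{x'} π(x')·q_d^u(x',y) = ν(u,y) where ν solves the traffic equation, and assume the internal transitions satisfy π(x)·q_i(x,x') = π(x')·q_i(x',x) summed appropriately, i.e., ∑_{x'} π(x')·q_i(x',x) = b(x)·π(x) with b(x) = ∑_{x'} q_i(x,x') < a(x) = ∑_{x'} q(x,x'). Then π(x) = (1/(a(x) - b(x)))·∑_y ∑_u ν(u,y)·p_a^u(y,x) for all x ∈ S. -/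
/-!
Splitting the global balance `a x π x = ∑ π x' q x' x` into the routed part and the internal
part, the internal inflow is `b x π x` by assumption. In the routed inflow, summing `π` against
`qd` first gives the departure flow `ν`, and summing `ν` against the routing `r` leaves `ν`
unchanged by the traffic equation, so the routed inflow is `∑ y ∑ u ν u y pa u y x`.
Hence `(a x - b x) π x` equals that arrival flow.
-/

open Finset

section

variable {S T : Type*} [Fintype S] [Fintype T]

def routedRate (qd : T → S → S → ℝ) (r : T → S → T → ℝ) (pa : T → S → S → ℝ) (x x' : S) : ℝ :=
  ∑ u, ∑ u', ∑ y, qd u x y * r u y u' * pa u' y x'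

theorem sum_mul_routedRate (qd : T → S → S → ℝ) (r : T → S → T → ℝ) (pa : T → S → S → ℝ)
    (π : S → ℝ) (x : S) :
    ∑ x', π x' * routedRate qd r pa x' x
      = ∑ y, ∑ u', (∑ u, (∑ x', π x' * qd u x' y) * r u y u') * pa u' y x := by
  calc ∑ x', π x' * routedRate qd r pa x' x
      = ∑ u, ∑ u', ∑ y, (∑ x', π x' * qd u x' y) * r u y u' * pa u' y x := by
        simp only [routedRate, mul_sum, sum_mul]
        rw [sum_comm]
        refine sum_congr rfl fun u _ => ?_
        rw [sum_comm]
        refine sum_congr rfl fun u' _ => ?_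
        rw [sum_comm]
        exact sum_congr rfl fun y _ => sum_congr rfl fun x' _ => by ring
    _ = ∑ u', ∑ y, ∑ u, (∑ x', π x' * qd u x' y) * r u y u' * pa u' y x :=
        sum_comm.trans (sum_congr rfl fun _ _ => sum_comm)
    _ = ∑ y, ∑ u', (∑ u, (∑ x', π x' * qd u x' y) * r u y u') * pa u' y x := by
        rw [sum_comm]
        simp only [sum_mul]

theorem sum_mul_routedRate_eq_arrivalFlow (qd : T → S → S → ℝ) (r : T → S → T → ℝ)
    (pa : T → S → S → ℝ) (π : S → ℝ) (ν : T → S → ℝ)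
    (htraffic : ∀ u y, ∑ u', ν u' y * r u' y u = ν u y)
    (hdep : ∀ u y, ∑ x', π x' * qd u x' y = ν u y) (x : S) :
    ∑ x', π x' * routedRate qd r pa x' x = ∑ y, ∑ u, ν u y * pa u y x := by
  simp only [sum_mul_routedRate, hdep, htraffic]

end

theorem stmt_17_general {S T : Type*} [Fintype S] [Fintype T]
    (qd : T → S → S → ℝ) (r : T → S → T → ℝ) (pa : T → S → S → ℝ)
    (qi : S → S → ℝ)
    (q : S → S → ℝ)
    (hq : ∀ x x', q x x' = (∑ u, ∑ u', ∑ y, qd u x y * r u y u' * pa u' y x') + qi x x')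
    (a b : S → ℝ)
    (hba : ∀ x, b x < a x)
    (ν : T → S → ℝ) (htraffic : ∀ u y, ∑ u', ν u' y * r u' y u = ν u y)
    (π : S → ℝ)
    (hstat : ∀ x, a x * π x = ∑ x', π x' * q x' x)
    (hdep : ∀ u y, ∑ x', π x' * qd u x' y = ν u y)
    (hint : ∀ x, ∑ x', π x' * qi x' x = b x * π x) :
    ∀ x, π x = (1 / (a x - b x)) * ∑ y, ∑ u, ν u y * pa u y x := by
  intro x
  have hbalance : a x * π x = (∑ y, ∑ u, ν u y * pa u y x) + b x * π x := by
    rw [hstat, ← hint, ← sum_mul_routedRate_eq_arrivalFlow qd r pa π ν htraffic hdep,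
      ← sum_add_distrib]
    exact sum_congr rfl fun x' _ => by rw [hq, routedRate, mul_add]
  rw [one_div, eq_inv_mul_iff_mul_eq₀ (sub_ne_zero.mpr (hba x).ne')]
  linarith

theorem stmt_17 {S T : Type*} [Fintype S] [Fintype T]
    (qd : T → S → S → ℝ) (r : T → S → T → ℝ) (pa : T → S → S → ℝ)
    (qi : S → S → ℝ)
    (hr1 : ∀ u y, ∑ u', r u y u' = 1) (hpa1 : ∀ u y, ∑ x', pa u y x' = 1)
    (q : S → S → ℝ)
    (hq : ∀ x x', q x x' = (∑ u, ∑ u', ∑ y, qd u x y * r u y u' * pa u' y x') + qi x x')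
    (a b : S → ℝ) (ha : ∀ x, a x = ∑ x', q x x') (hb : ∀ x, b x = ∑ x', qi x x')
    (hba : ∀ x, b x < a x)
    (ν : T → S → ℝ) (htraffic : ∀ u y, ∑ u', ν u' y * r u' y u = ν u y)
    (π : S → ℝ)
    (hstat : ∀ x, a x * π x = ∑ x', π x' * q x' x)
    (hdep : ∀ u y, ∑ x', π x' * qd u x' y = ν u y)
    (hint : ∀ x, ∑ x', π x' * qi x' x = b x * π x) :
    ∀ x, π x = (1 / (a x - b x)) * ∑ y, ∑ u, ν u y * pa u y x :=
  stmt_17_general qd r pa qi q hq a b hba ν htraffic π hstat hdep hint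
end

section
/- (Product form for two independent quasi-reversible nodes in tandem) Let S₁, S₂ be finite state spaces with rate functions q₁ on S₁ and q₂ on S₂, each having stationary distribution π₁, π₂ respectively (all values positive), where q₁ = λ·p_a^{(1)} + q_d^{(1)}, q₂ = β·p_a^{(2)} + q_d^{(2)}, node 1 is quasi-reversible with departure rate β (∑_{x₁'} π₁(x₁')·q_d^{(1)}(x₁',x₁) = β·π₁(x₁)), and node 2 receives the departures of node 1 as arrivals. Then the product measure π(x₁,x₂) = π₁(x₁)·π₂(x₂) satisfies the global balance equation for the joint rate function q((x₁,x₂),(x₁',x₂')) = λ·p_a^{(1)}(x₁,x₁')·1(x₂'=x₂) + q_d^{(1)}(x₁,x₁')·p_a^{(2)}(x₂,x₂') + q_d^{(2)}(x₂,x₂')·1(x₁'=x₁). -/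
/-!
Write `A₁(x₁) = ∑ π₁(y) p_a⁽¹⁾(y, x₁)`, `A₂(x₂) = ∑ π₂(y) p_a⁽²⁾(y, x₂)` for the arrival flows and
`D₁, D₂` for the total departure rates. Since arrivals are stochastic, the joint chain leaves
`(x₁, x₂)` at rate `λ + D₁(x₁) + D₂(x₂)`. Quasi-reversibility says that departures from node 1 enter
`x₁` at flow `β π₁(x₁)`, which is exactly the arrival intensity node 2 is balanced for; so the
flow into `(x₁, x₂)` is `λ A₁ π₂ + β π₁ A₂ + π₁ ∑ π₂ q_d⁽²⁾(·, x₂)`, and the two node balance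
equations turn this into `π₁ π₂ (λ + D₁ + D₂)`.
-/

open Finset

section

variable {R : Type*} [CommRing R]

def IsGlobalBalance {S : Type*} [Fintype S] (q : S → S → R) (π : S → R) : Prop :=
  ∀ x, (∑ y, q x y) * π x = ∑ y, π y * q y x

-- A departure `qd1` from node 1 is at the same time an arrival `pa2` at node 2.
def tandemRate {S1 S2 : Type*} [DecidableEq S1] [DecidableEq S2] (lam : R)
    (pa1 qd1 : S1 → S1 → R) (pa2 qd2 : S2 → S2 → R) (x x' : S1 × S2) : R :=
  lam * pa1 x.1 x'.1 * (if x'.2 = x.2 then 1 else 0)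
    + qd1 x.1 x'.1 * pa2 x.2 x'.2
    + qd2 x.2 x'.2 * (if x'.1 = x.1 then 1 else 0)

section Node

variable {S : Type*} [Fintype S] {c : R} {p d : S → S → R}

lemma sum_mul_add_of_sum_eq_one (hp : ∀ x, ∑ y, p x y = 1) (x : S) :
    ∑ y, (c * p x y + d x y) = c + ∑ y, d x y := by
  simp only [sum_add_distrib, ← mul_sum, hp, mul_one]

lemma sum_mul_mul_add_distrib (π : S → R) (x : S) :
    ∑ y, π y * (c * p y x + d y x) = c * ∑ y, π y * p y x + ∑ y, π y * d y x := by
  simp only [mul_add, sum_add_distrib, mul_sum]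
  congr 1
  exact sum_congr rfl fun _ _ => by ring

lemma IsGlobalBalance.mul_add_of_sum_eq_one {π : S → R} (hp : ∀ x, ∑ y, p x y = 1)
    (h : IsGlobalBalance (fun x y => c * p x y + d x y) π) (x : S) :
    (c + ∑ y, d x y) * π x = c * ∑ y, π y * p y x + ∑ y, π y * d y x := by
  rw [← sum_mul_add_of_sum_eq_one hp, ← sum_mul_mul_add_distrib]
  exact h x

end Node

section Tandem

variable {S1 S2 : Type*} [Fintype S1] [Fintype S2] [DecidableEq S1] [DecidableEq S2]
  {lam : R} {pa1 qd1 : S1 → S1 → R} {pa2 qd2 : S2 → S2 → R}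

lemma sum_tandemRate (hpa1 : ∀ x, ∑ x', pa1 x x' = 1) (hpa2 : ∀ x, ∑ x', pa2 x x' = 1)
    (x : S1 × S2) :
    ∑ y, tandemRate lam pa1 qd1 pa2 qd2 x y = lam + ∑ y, qd1 x.1 y + ∑ y, qd2 x.2 y := by
  simp only [tandemRate, sum_add_distrib]
  rw [Fintype.sum_prod_type, Fintype.sum_prod_type, Fintype.sum_prod_type_right]
  simp only [mul_ite, mul_one, mul_zero, sum_ite_eq', mem_univ, if_true, ← mul_sum, hpa1, hpa2]

lemma sum_mul_tandemRate (π1 : S1 → R) (π2 : S2 → R) (x : S1 × S2) :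
    ∑ y, π1 y.1 * π2 y.2 * tandemRate lam pa1 qd1 pa2 qd2 y x
      = lam * (∑ y, π1 y * pa1 y x.1) * π2 x.2
        + (∑ y, π1 y * qd1 y x.1) * (∑ y, π2 y * pa2 y x.2)
        + π1 x.1 * ∑ y, π2 y * qd2 y x.2 := by
  simp only [tandemRate, mul_add, sum_add_distrib]
  rw [Fintype.sum_prod_type, Fintype.sum_prod_type, Fintype.sum_prod_type_right]
  simp only [mul_ite, mul_one, mul_zero, sum_ite_eq, mem_univ, if_true]
  congr 1
  congr 1
  · rw [mul_sum, sum_mul]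
    exact sum_congr rfl fun _ _ => by ring
  · rw [sum_mul_sum]
    exact sum_congr rfl fun _ _ => sum_congr rfl fun _ _ => by ring
  · rw [mul_sum]
    exact sum_congr rfl fun _ _ => by ring

theorem isGlobalBalance_tandemRate {β : R} {π1 : S1 → R} {π2 : S2 → R}
    (hpa1 : ∀ x, ∑ x', pa1 x x' = 1) (hpa2 : ∀ x, ∑ x', pa2 x x' = 1)
    (h1 : IsGlobalBalance (fun x y => lam * pa1 x y + qd1 x y) π1)
    (h2 : IsGlobalBalance (fun x y => β * pa2 x y + qd2 x y) π2)
    (hqr : ∀ x, ∑ y, π1 y * qd1 y x = β * π1 x) :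
    IsGlobalBalance (tandemRate lam pa1 qd1 pa2 qd2) fun x => π1 x.1 * π2 x.2 := by
  rintro ⟨x1, x2⟩
  have e1 := h1.mul_add_of_sum_eq_one hpa1 x1
  have e2 := h2.mul_add_of_sum_eq_one hpa2 x2
  rw [hqr] at e1
  rw [sum_tandemRate hpa1 hpa2, sum_mul_tandemRate, hqr]
  linear_combination π2 x2 * e1 + π1 x1 * e2

end Tandem

end

theorem stmt_18_general {S1 S2 : Type*} [Fintype S1] [Fintype S2] [DecidableEq S1] [DecidableEq S2]
    (lam β : ℝ)
    (pa1 : S1 → S1 → ℝ) (pa2 : S2 → S2 → ℝ)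
    (hpa1 : ∀ x, ∑ x', pa1 x x' = 1) (hpa2 : ∀ x, ∑ x', pa2 x x' = 1)
    (qd1 : S1 → S1 → ℝ) (qd2 : S2 → S2 → ℝ)
    (π1 : S1 → ℝ) (π2 : S2 → ℝ)
    (hstat1 : ∀ x, (∑ y, (lam * pa1 x y + qd1 x y)) * π1 x
        = ∑ y, π1 y * (lam * pa1 y x + qd1 y x))
    (hstat2 : ∀ x, (∑ y, (β * pa2 x y + qd2 x y)) * π2 x
        = ∑ y, π2 y * (β * pa2 y x + qd2 y x))
    (hqr : ∀ x, ∑ y, π1 y * qd1 y x = β * π1 x)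
    (q : S1 × S2 → S1 × S2 → ℝ)
    (hq : ∀ x x', q x x' = lam * pa1 x.1 x'.1 * (if x'.2 = x.2 then 1 else 0)
        + qd1 x.1 x'.1 * pa2 x.2 x'.2
        + qd2 x.2 x'.2 * (if x'.1 = x.1 then 1 else 0)) :
    ∀ x : S1 × S2, (∑ y, q x y) * (π1 x.1 * π2 x.2)
      = ∑ y, (π1 y.1 * π2 y.2) * q y x := by
  obtain rfl : q = tandemRate lam pa1 qd1 pa2 qd2 := funext fun x => funext (hq x)
  exact isGlobalBalance_tandemRate hpa1 hpa2 hstat1 hstat2 hqr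

theorem stmt_18 {S1 S2 : Type*} [Fintype S1] [Fintype S2] [DecidableEq S1] [DecidableEq S2]
    (lam β : ℝ) (hlam : 0 < lam) (hβ : 0 < β)
    (pa1 : S1 → S1 → ℝ) (pa2 : S2 → S2 → ℝ)
    (hpa1n : ∀ x x', 0 ≤ pa1 x x') (hpa2n : ∀ x x', 0 ≤ pa2 x x')
    (hpa1 : ∀ x, ∑ x', pa1 x x' = 1) (hpa2 : ∀ x, ∑ x', pa2 x x' = 1)
    (qd1 : S1 → S1 → ℝ) (qd2 : S2 → S2 → ℝ)
    (hqd1 : ∀ x x', 0 ≤ qd1 x x') (hqd2 : ∀ x x', 0 ≤ qd2 x x')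
    (π1 : S1 → ℝ) (π2 : S2 → ℝ) (hπ1 : ∀ x, 0 < π1 x) (hπ2 : ∀ x, 0 < π2 x)
    (hstat1 : ∀ x, (∑ y, (lam * pa1 x y + qd1 x y)) * π1 x
        = ∑ y, π1 y * (lam * pa1 y x + qd1 y x))
    (hstat2 : ∀ x, (∑ y, (β * pa2 x y + qd2 x y)) * π2 x
        = ∑ y, π2 y * (β * pa2 y x + qd2 y x))
    (hqr : ∀ x, ∑ y, π1 y * qd1 y x = β * π1 x)
    (q : S1 × S2 → S1 × S2 → ℝ)
    (hq : ∀ x x', q x x' = lam * pa1 x.1 x'.1 * (if x'.2 = x.2 then 1 else 0)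
        + qd1 x.1 x'.1 * pa2 x.2 x'.2
        + qd2 x.2 x'.2 * (if x'.1 = x.1 then 1 else 0)) :
    ∀ x : S1 × S2, (∑ y, q x y) * (π1 x.1 * π2 x.2)
      = ∑ y, (π1 y.1 * π2 y.2) * q y x :=
  stmt_18_general lam β pa1 pa2 hpa1 hpa2 qd1 qd2 π1 π2 hstat1 hstat2 hqr q hq
end

section
/- (Whittle network stationary measure) Let S = ℤ≥0ⁿ. Suppose q_d(x, x-u⁺, u) = Ψ(x-u⁺)/Φ(x)·1(x - u⁺ ∈ S) for positive functions Ψ, Φ on S, routing transfers u to u' with probability r(u,u') (state independent, ∑_{u'} r(u,u') = 1), arrivals satisfy p_a(u', y, x) = 1(x = y + (u')⁺), and internal transitions vanish. If ν(u) = ∏_i w_i^{u_i} solves the traffic equation ∑_{u'} ν(u')·r(u',u) = ν(u), then the measure π(x) = Φ(x)·∏_{i=1}^n w_i^{x_i} satisfies, for each x ∈ S, the global balance equation a(x)·π(x) = ∑_{x'} π(x')·q(x',x) with q(x,x') = ∑_{u,u'} q_d(x, x-u⁺, u)·r(u,u')·1(x' = x - u⁺ + (u')⁺) and a(x) = ∑_{x'}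 q(x,x'), restricted to the case where the index set T of batch types is finite. -/
/-!
Split the global balance equation at `x` according to the pair of batch types `(u, u')` of a
move. The only state from which `(u, u')` leads to `x` is `x - u'⁺ + u⁺`, which exists iff
`u'⁺ ≤ x`; because `Ψ = Φ`, the factor `Φ` cancels and the flow of that move into `x` is
`Φ (x - u'⁺) w^(x - u'⁺) ν(u) r(u, u')`. Summed over `u`, the traffic equation makes the inflow
through `u'` equal to `Φ (x - u'⁺) w^x`, which is also the outflow `π(x) qd(x, u')` through `u'`
(the routing probabilities out of `u'` sum to one).
-/

open Finset

theorem le_and_eq_tsub_add_iff {α : Type*} [AddCommMonoid α] [PartialOrder α]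
    [CanonicallyOrderedAdd α] [Sub α] [OrderedSub α] [AddLeftReflectLE α] {a b x y : α} :
    a ≤ y ∧ x = y - a + b ↔ b ≤ x ∧ y = x - b + a := by
  constructor <;>
  · rintro ⟨hle, rfl⟩
    exact ⟨le_add_self, by rw [add_tsub_cancel_right, tsub_add_cancel_of_le hle]⟩

theorem tsum_sum_sum_ite_eq {ι κ α M : Type*} [DecidableEq α] [AddCommMonoid M]
    [TopologicalSpace M] [ContinuousAdd M] [T2Space M] (s : Finset ι) (t : Finset κ)
    (c : ι → κ → α) (v : ι → κ → M) :
    ∑' y, ∑ i ∈ s, ∑ j ∈ t, (if y = c i j then v i j else 0) = ∑ i ∈ s, ∑ j ∈ t, v i j := by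
  simp_rw [← sum_product']
  exact (Summable.tsum_finsetSum fun p _ => (hasSum_ite_eq _ _).summable).trans
    (sum_congr rfl fun p _ => tsum_ite_eq _ _)

theorem prod_pow_add {ι M : Type*} [CommMonoid M] (s : Finset ι) (w : ι → M) (x y : ι → ℕ) :
    ∏ i ∈ s, w i ^ (x + y) i = (∏ i ∈ s, w i ^ x i) * ∏ i ∈ s, w i ^ y i := by
  simp only [Pi.add_apply, pow_add, prod_mul_distrib]

namespace WhittleNetwork

variable {n : ℕ} {T : Finset (Fin (n + 1) → ℕ)} {r : (Fin (n + 1) → ℕ) → (Fin (n + 1) → ℕ) → ℝ}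
  {w : Fin n → ℝ} {Φ : (Fin n → ℕ) → ℝ} {up : (Fin (n + 1) → ℕ) → (Fin n → ℕ)}
  {qd : (Fin n → ℕ) → (Fin (n + 1) → ℕ) → ℝ} {q : (Fin n → ℕ) → (Fin n → ℕ) → ℝ}
  {π : (Fin n → ℕ) → ℝ}

theorem tsum_rate_eq_sum_departure (hr1 : ∀ u ∈ T, ∑ u' ∈ T, r u u' = 1)
    (hq : ∀ x x', q x x' = ∑ u ∈ T, ∑ u' ∈ T,
      qd x u * r u u' * (if x' = x - up u + up u' then 1 else 0)) (x : Fin n → ℕ) :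
    ∑' x', q x x' = ∑ u ∈ T, qd x u := by
  simp only [hq, mul_ite, mul_one, mul_zero]
  rw [tsum_sum_sum_ite_eq]
  exact sum_congr rfl fun u hu => by rw [← mul_sum, hr1 u hu, mul_one]

theorem weight_mul_departure (hΦ : ∀ x, 0 < Φ x)
    (hqd : ∀ x u, qd x u = if ∀ i, up u i ≤ x i then Φ (x - up u) / Φ x else 0)
    (hπ : ∀ x, π x = Φ x * ∏ i, w i ^ x i) (x : Fin n → ℕ) (u : Fin (n + 1) → ℕ) :
    π x * qd x u = if ∀ i, up u i ≤ x i then Φ (x - up u) * ∏ i, w i ^ x i else 0 := by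
  rw [hqd, hπ]
  split_ifs
  · field_simp [(hΦ x).ne']
  · rw [mul_zero]

theorem weight_mul_departure_mul_routing (hΦ : ∀ x, 0 < Φ x)
    (hqd : ∀ x u, qd x u = if ∀ i, up u i ≤ x i then Φ (x - up u) / Φ x else 0)
    (hπ : ∀ x, π x = Φ x * ∏ i, w i ^ x i) (x' x : Fin n → ℕ) (u u' : Fin (n + 1) → ℕ) :
    π x' * (qd x' u * r u u' * (if x = x' - up u + up u' then 1 else 0)) =
      if x' = x - up u' + up u then
        (if ∀ i, up u' i ≤ x i then
          Φ (x - up u') * (∏ i, w i ^ (x - up u' + up u) i) * r u u' else 0)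
      else 0 := by
  have hmove := le_and_eq_tsub_add_iff (a := up u) (b := up u') (x := x) (y := x')
  rw [← mul_assoc, ← mul_assoc, weight_mul_departure hΦ hqd hπ]
  by_cases h : (∀ i, up u i ≤ x' i) ∧ x = x' - up u + up u'
  · obtain ⟨hle, hx'⟩ : (∀ i, up u' i ≤ x i) ∧ x' = x - up u' + up u := hmove.mp h
    have hsrc : x - up u' = x' - up u := by rw [h.2, add_tsub_cancel_right]
    rw [if_pos h.1, if_pos h.2, if_pos hx', if_pos hle, ← hx', hsrc, mul_one]
  · have h' : ¬((∀ i, up u' i ≤ x i) ∧ x' = x - up u' + up u) := mt hmove.mpr h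
    rw [ite_eq_right_iff.mpr fun hx' => ite_eq_right_iff.mpr fun hle => absurd ⟨hle, hx'⟩ h']
    by_cases h1 : ∀ i, up u i ≤ x' i
    · rw [if_neg fun h2 => h ⟨h1, h2⟩, mul_zero]
    · rw [if_neg h1, zero_mul, zero_mul]

theorem weight_mul_rate_eq_sum (hΦ : ∀ x, 0 < Φ x)
    (hqd : ∀ x u, qd x u = if ∀ i, up u i ≤ x i then Φ (x - up u) / Φ x else 0)
    (hπ : ∀ x, π x = Φ x * ∏ i, w i ^ x i)
    (hq : ∀ x x', q x x' = ∑ u ∈ T, ∑ u' ∈ T,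
      qd x u * r u u' * (if x' = x - up u + up u' then 1 else 0)) (x' x : Fin n → ℕ) :
    π x' * q x' x = ∑ u ∈ T, ∑ u' ∈ T,
      if x' = x - up u' + up u then
        (if ∀ i, up u' i ≤ x i then
          Φ (x - up u') * (∏ i, w i ^ (x - up u' + up u) i) * r u u' else 0)
      else 0 := by
  rw [hq, mul_sum]
  refine sum_congr rfl fun u _ => ?_
  rw [mul_sum]
  exact sum_congr rfl fun u' _ => weight_mul_departure_mul_routing hΦ hqd hπ x' x u u'

theorem prod_pow_add_eq_sum_routing {ν : (Fin (n + 1) → ℕ) → ℝ}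
    (hν : ∀ u, ν u = ∏ i, w i ^ up u i) (htraffic : ∀ u ∈ T, ∑ u' ∈ T, ν u' * r u' u = ν u)
    {u' : Fin (n + 1) → ℕ} (hu' : u' ∈ T) (y : Fin n → ℕ) :
    ∏ i, w i ^ (y + up u') i = ∑ u ∈ T, (∏ i, w i ^ (y + up u) i) * r u u' := by
  rw [prod_pow_add, ← hν, ← htraffic u' hu', mul_sum]
  exact sum_congr rfl fun u _ => by rw [prod_pow_add, hν, mul_assoc]

end WhittleNetwork

open WhittleNetwork

theorem stmt_19_general (n : ℕ) (T : Finset (Fin (n + 1) → ℕ))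
    (r : (Fin (n + 1) → ℕ) → (Fin (n + 1) → ℕ) → ℝ)
    (hr1 : ∀ u ∈ T, ∑ u' ∈ T, r u u' = 1)
    (w : Fin n → ℝ)
    (ν : (Fin (n + 1) → ℕ) → ℝ) (hν : ∀ u, ν u = ∏ i, w i ^ u i.succ)
    (htraffic : ∀ u ∈ T, ∑ u' ∈ T, ν u' * r u' u = ν u)
    (Φ : (Fin n → ℕ) → ℝ) (hΦ : ∀ x, 0 < Φ x)
    (up : (Fin (n + 1) → ℕ) → (Fin n → ℕ)) (hup : ∀ u i, up u i = u i.succ)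
    (qd : (Fin n → ℕ) → (Fin (n + 1) → ℕ) → ℝ)
    (hqd : ∀ x u, qd x u =
      if ∀ i, up u i ≤ x i then Φ (fun i => x i - up u i) / Φ x else 0)
    (q : (Fin n → ℕ) → (Fin n → ℕ) → ℝ)
    (hq : ∀ x x', q x x' = ∑ u ∈ T, ∑ u' ∈ T,
      qd x u * r u u' * (if x' = fun i => x i - up u i + up u' i then 1 else 0))
    (a : (Fin n → ℕ) → ℝ) (ha : ∀ x, a x = ∑' x', q x x')
    (π : (Fin n → ℕ) → ℝ) (hπ : ∀ x, π x = Φ x * ∏ i, w i ^ x i) :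
    ∀ x, a x * π x = ∑' x', π x' * q x' x := by
  intro x
  have hνup : ∀ u, ν u = ∏ i, w i ^ up u i := by simp only [hν, hup, implies_true]
  calc a x * π x = ∑ u' ∈ T, π x * qd x u' := by
        rw [ha, tsum_rate_eq_sum_departure hr1 hq, sum_mul]
        exact sum_congr rfl fun u' _ => mul_comm _ _
    _ = ∑ u' ∈ T, ∑ u ∈ T, if ∀ i, up u' i ≤ x i then
          Φ (x - up u') * (∏ i, w i ^ (x - up u' + up u) i) * r u u' else 0 := by
        refine sum_congr rfl fun u' hu' => ?_
        rw [weight_mul_departure hΦ hqd hπ]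
        split_ifs with hle
        · rw [← tsub_add_cancel_of_le (show up u' ≤ x from hle),
            prod_pow_add_eq_sum_routing hνup htraffic hu', mul_sum, add_tsub_cancel_right]
          exact sum_congr rfl fun u _ => (mul_assoc _ _ _).symm
        · rw [sum_const_zero]
    _ = ∑' x', π x' * q x' x := by
        rw [sum_comm, tsum_congr (weight_mul_rate_eq_sum hΦ hqd hπ hq · x), tsum_sum_sum_ite_eq]

theorem stmt_19 (n : ℕ) (hn : 1 ≤ n) (T : Finset (Fin (n + 1) → ℕ))
    (r : (Fin (n + 1) → ℕ) → (Fin (n + 1) → ℕ) → ℝ)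
    (hr0 : ∀ u u', 0 ≤ r u u') (hr1 : ∀ u ∈ T, ∑ u' ∈ T, r u u' = 1)
    (hrsize : ∀ u u', 0 < r u u' → ∑ k, u k = ∑ k, u' k)
    (w : Fin n → ℝ) (hw : ∀ i, 0 < w i)
    (ν : (Fin (n + 1) → ℕ) → ℝ) (hν : ∀ u, ν u = ∏ i, w i ^ u i.succ)
    (htraffic : ∀ u ∈ T, ∑ u' ∈ T, ν u' * r u' u = ν u)
    (Φ : (Fin n → ℕ) → ℝ) (hΦ : ∀ x, 0 < Φ x)
    (up : (Fin (n + 1) → ℕ) → (Fin n → ℕ)) (hup : ∀ u i, up u i = u i.succ)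
    (qd : (Fin n → ℕ) → (Fin (n + 1) → ℕ) → ℝ)
    (hqd : ∀ x u, qd x u =
      if ∀ i, up u i ≤ x i then Φ (fun i => x i - up u i) / Φ x else 0)
    (q : (Fin n → ℕ) → (Fin n → ℕ) → ℝ)
    (hq : ∀ x x', q x x' = ∑ u ∈ T, ∑ u' ∈ T,
      qd x u * r u u' * (if x' = fun i => x i - up u i + up u' i then 1 else 0))
    (a : (Fin n → ℕ) → ℝ) (ha : ∀ x, a x = ∑' x', q x x')
    (π : (Fin n → ℕ) → ℝ) (hπ : ∀ x, π x = Φ x * ∏ i, w i ^ x i) :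
    ∀ x, a x * π x = ∑' x', π x' * q x' x :=
  stmt_19_general n T r hr1 w ν hν htraffic Φ hΦ up hup qd hqd q hq a ha π hπ
end
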